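/- arXiv:2502.03609 — 2 statements merged into one kernel-verified Lean document; each statement's English description precedes it below -/
import Mathlib

section
/- If Z_1, ..., Z_n, Z are exchangeable real-valued random variables with almost surely distinct values, and F_n(z) = (1/n)·#{i ≤ n : Z_i ≤ z} is the empirical CDF of Z_1,...,Z_n, then F_n(Z) is uniformly distributed on the set {0, 1/n, 2/n, ..., 1}. -/
/-!
Almost surely the values are distinct, so the ranks of the `n + 1` coordinates form a permutation
of `{0, …, n}`: for each `k` exactly one coordinate has rank `k`. By exchangeability the
probability that a given coordinate has rank `k` does not depend on the coordinate, so it is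
`1 / (n + 1)`. Finally `n F_n(Z)` is the rank of `Z` among `Z_1, …, Z_n, Z`.
-/

open MeasureTheory Finset

section Rank

variable {ι α : Type*} [Fintype ι] [LinearOrder α]

def rank (v : ι → α) (j : ι) : ℕ := #{i | v i < v j}

lemma rank_lt_card (v : ι → α) (j : ι) : rank v j < Fintype.card ι :=
  card_lt_univ_of_notMem (x := j) (by simp)

lemma rank_comp_perm (v : ι → α) (σ : Equiv.Perm ι) (j : ι) :
    rank (v ∘ σ) j = rank v (σ j) :=
  card_equiv σ (by simp)

lemma rank_lt_rank {v : ι → α} {j j' : ι} (h : v j < v j') : rank v j < rank v j' :=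
  card_lt_card <| (ssubset_iff_of_subset fun i hi => by
    simp only [mem_filter_univ] at hi ⊢; exact hi.trans h).mpr ⟨j, by simp [h], by simp⟩

lemma rank_injective {v : ι → α} (hv : Function.Injective v) : Function.Injective (rank v) := by
  intro j j' h
  by_contra hne
  rcases (hv.ne hne).lt_or_gt with hlt | hlt
  · exact (rank_lt_rank hlt).ne h
  · exact (rank_lt_rank hlt).ne' h

lemma image_rank_eq_range {v : ι → α} (hv : Function.Injective v) :
    univ.image (rank v) = range (Fintype.card ι) :=
  eq_of_subset_of_card_le (fun _ hk => by
      obtain ⟨j, -, rfl⟩ := mem_image.mp hk; exact mem_range.mpr (rank_lt_card v j))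
    (by rw [card_image_of_injective _ (rank_injective hv), card_range, card_univ])

lemma card_filter_rank_eq {v : ι → α} (hv : Function.Injective v) {k : ℕ}
    (hk : k < Fintype.card ι) : #{j | rank v j = k} = 1 := by
  obtain ⟨j, -, rfl⟩ := mem_image.mp ((image_rank_eq_range hv).symm ▸ mem_range.mpr hk)
  exact card_eq_one.mpr ⟨j, by ext; simp [(rank_injective hv).eq_iff]⟩

end Rank

section Exchangeable

variable {Ω ι α : Type*} [MeasurableSpace Ω] [Fintype ι]
  [MeasurableSpace α] [TopologicalSpace α] [LinearOrder α] [OrderClosedTopology α]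
  [SecondCountableTopology α] [OpensMeasurableSpace α]

def Exchangeable (X : Ω → ι → α) (P : Measure Ω) : Prop :=
  ∀ σ : Equiv.Perm ι, P.map (fun ω => X ω ∘ σ) = P.map X

lemma measurable_rank (j : ι) : Measurable fun v : ι → α => rank v j := by
  have h : (fun v : ι → α => rank v j) = fun v => ∑ i, if v i < v j then 1 else 0 := by
    funext v; rw [rank, card_filter]
  rw [h]
  exact Finset.measurable_sum _ fun i _ => Measurable.ite
    (measurableSet_lt (measurable_pi_apply i) (measurable_pi_apply j))
    measurable_const measurable_const

lemma measurableSet_rank_eq (j : ι) (k : ℕ) : MeasurableSet {v : ι → α | rank v j = k} :=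
  measurable_rank j (measurableSet_singleton k)

lemma Exchangeable.measure_rank_eq {X : Ω → ι → α} {P : Measure Ω} (hX : Measurable X)
    (hexch : Exchangeable X P) (j j' : ι) (k : ℕ) :
    P {ω | rank (X ω) j = k} = P {ω | rank (X ω) j' = k} := by
  classical
  have hσ : (fun ω => X ω ∘ Equiv.swap j' j) ⁻¹' {v | rank v j = k} =
      {ω | rank (X ω) j' = k} := by
    ext ω; simp [rank_comp_perm]
  rw [← hσ, ← Measure.map_apply (by fun_prop) (measurableSet_rank_eq j k), hexch,
    Measure.map_apply hX (measurableSet_rank_eq j k)]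
  rfl

lemma sum_measure_rank_eq {X : Ω → ι → α} {P : Measure Ω} [IsProbabilityMeasure P]
    (hX : Measurable X) (hinj : ∀ᵐ ω ∂P, Function.Injective (X ω)) {k : ℕ}
    (hk : k < Fintype.card ι) : ∑ j, P {ω | rank (X ω) j = k} = 1 := by
  have hE (j : ι) : MeasurableSet {ω | rank (X ω) j = k} := hX (measurableSet_rank_eq j k)
  calc ∑ j, P {ω | rank (X ω) j = k}
      = ∑ j, ∫⁻ ω, {ω | rank (X ω) j = k}.indicator 1 ω ∂P := by
        simp only [lintegral_indicator_one (hE _)]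
    _ = ∫⁻ ω, ∑ j, {ω | rank (X ω) j = k}.indicator 1 ω ∂P :=
        (lintegral_finsetSum _ fun j _ => measurable_const.indicator (hE j)).symm
    _ = ∫⁻ _, 1 ∂P := lintegral_congr_ae <| hinj.mono fun ω hω => by
        simp [Set.indicator_apply, card_filter_rank_eq hω hk]
    _ = 1 := by simp

theorem Exchangeable.measure_rank_eq_one_div_card {X : Ω → ι → α} {P : Measure Ω}
    [IsProbabilityMeasure P] (hX : Measurable X) (hexch : Exchangeable X P)
    (hinj : ∀ᵐ ω ∂P, Function.Injective (X ω)) (j : ι) {k : ℕ} (hk : k < Fintype.card ι) :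
    P {ω | rank (X ω) j = k} = 1 / Fintype.card ι := by
  have hsum := sum_measure_rank_eq hX hinj hk
  simp only [hexch.measure_rank_eq hX _ j, sum_const, card_univ, nsmul_eq_mul] at hsum
  rw [ENNReal.eq_div_iff (Nat.cast_ne_zero.mpr (Nat.zero_lt_of_lt hk).ne') (by simp), hsum]

end Exchangeable

lemma card_filter_castSucc_le_last_eq_rank {α : Type*} [LinearOrder α] {n : ℕ}
    {v : Fin (n + 1) → α} (hv : Function.Injective v) :
    #{i : Fin n | v i.castSucc ≤ v (Fin.last n)} = rank v (Fin.last n) := by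
  have hlt (i : Fin n) : v i.castSucc ≤ v (Fin.last n) ↔ v i.castSucc < v (Fin.last n) :=
    (hv.ne (Fin.castSucc_lt_last i).ne).le_iff_lt
  simp only [rank, card_filter, Fin.sum_univ_castSucc, hlt, lt_irrefl, if_false, add_zero]

theorem stmt0 {Ω : Type*} [MeasurableSpace Ω] (P : Measure Ω) [IsProbabilityMeasure P]
    (n : ℕ) (hn : 0 < n) (Z : Fin (n + 1) → Ω → ℝ) (hZ : ∀ i, Measurable (Z i))
    (hexch : ∀ σ : Equiv.Perm (Fin (n + 1)),
      Measure.map (fun ω i => Z (σ i) ω) P = Measure.map (fun ω i => Z i ω) P)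
    (hdist : ∀ᵐ ω ∂P, Function.Injective (fun i => Z i ω))
    (Fn : Ω → ℝ → ℝ)
    (hFn : ∀ ω z, Fn ω z =
      ((univ.filter (fun i : Fin n => Z i.castSucc ω ≤ z)).card : ℝ) / n) :
    ∀ k : ℕ, k ≤ n →
      P {ω | Fn ω (Z (Fin.last n) ω) = (k : ℝ) / n} = 1 / (n + 1) := by
  intro k hk
  set X : Ω → Fin (n + 1) → ℝ := fun ω i => Z i ω
  have hFn_rank : {ω | Fn ω (Z (Fin.last n) ω) = (k : ℝ) / n}
      =ᵐ[P] {ω | rank (X ω) (Fin.last n) = k} := by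
    filter_upwards [hdist] with ω hω
    have hcard : #{i : Fin n | Z i.castSucc ω ≤ Z (Fin.last n) ω} = rank (X ω) (Fin.last n) :=
      card_filter_castSucc_le_last_eq_rank hω
    refine propext (?_ : Fn ω _ = _ ↔ rank (X ω) _ = k)
    rw [hFn, hcard, div_left_inj' (Nat.cast_ne_zero.mpr hn.ne'), Nat.cast_inj]
  rw [measure_congr hFn_rank, Exchangeable.measure_rank_eq_one_div_card
    (measurable_pi_lambda _ hZ) hexch hdist _ (by simpa using Nat.lt_succ_of_le hk)]
  simp
end

section
/- Let Z_1,...,Z_n, Z be exchangeable real-valued random variables with almost surely distinct values, F_n the empirical CDF of Z_1,...,Z_n, and 0 ≤ a ≤ b ≤ 1 with (⌊nb⌋ − ⌈na⌉ + 1)/(n+1) ≥ 1−α. Then P(Z ∈ {z : F_n(z) ∈ [a,b]}) ≥ 1−α. -/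
/-! The rank of `Z_{n+1}` among `Z_1, …, Z_{n+1}` is `n F_n(Z_{n+1}) + 1`. By exchangeability all
coordinates have the same rank distribution, and since the values are almost surely distinct the
ranks are almost surely a permutation of `1, …, n+1`; hence each rank is uniform on `{1, …, n+1}`.
The event `F_n(Z) ∈ [a, b]` contains the event that the rank of `Z` lies in
`[⌈na⌉ + 1, ⌊nb⌋ + 1]`, which has probability `(⌊nb⌋ - ⌈na⌉ + 1)/(n+1)`. -/

open MeasureTheory Finset

lemma div_mem_Icc_of_ceil_le_of_le_floor {n c : ℕ} (hn : 0 < n) {a b : ℝ}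
    (ha : ⌈(n : ℝ) * a⌉ ≤ c) (hb : c ≤ ⌊(n : ℝ) * b⌋) : (c : ℝ) / n ∈ Set.Icc a b := by
  have hn' : (0 : ℝ) < n := Nat.cast_pos.mpr hn
  have hca : (n : ℝ) * a ≤ c := by exact_mod_cast Int.ceil_le.mp ha
  have hcb : (c : ℝ) ≤ n * b := by exact_mod_cast Int.le_floor.mp hb
  constructor
  · rw [le_div_iff₀ hn']
    linarith
  · rw [div_le_iff₀ hn']
    linarith

namespace ExchangeableRank

open Function

def Exchangeable {Ω ι α : Type*} [MeasurableSpace Ω] [MeasurableSpace α] (P : Measure Ω)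
    (X : ι → Ω → α) : Prop :=
  ∀ σ : Equiv.Perm ι, Measure.map (fun ω i => X (σ i) ω) P = Measure.map (fun ω i => X i ω) P

section Combinatorics

variable {α ι : Type*} [LinearOrder α] [Fintype ι]

def rank (j : ι) (v : ι → α) : ℕ := #{i | v i ≤ v j}

lemma rank_pos (j : ι) (v : ι → α) : 0 < rank j v :=
  card_pos.mpr ⟨j, by simp⟩

lemma rank_le_card (j : ι) (v : ι → α) : rank j v ≤ Fintype.card ι :=
  card_filter_le _ _

lemma rank_lt_rank {j j' : ι} {v : ι → α} (h : v j < v j') : rank j v < rank j' v := by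
  refine card_lt_card ((ssubset_iff_of_subset fun i hi => ?_).mpr ⟨j', by simp, by simpa using h⟩)
  simp only [mem_filter, mem_univ, true_and] at hi ⊢
  exact hi.trans h.le

lemma rank_injective {v : ι → α} (hv : Injective v) : Injective (rank · v) := by
  intro j j' h
  by_contra hne
  rcases (hv.ne hne).lt_or_gt with hlt | hlt
  · exact (rank_lt_rank hlt).ne h
  · exact (rank_lt_rank hlt).ne' h

lemma exists_rank_eq {v : ι → α} (hv : Injective v) {k : ℕ}
    (hk : k ∈ Icc 1 (Fintype.card ι)) : ∃ j, rank j v = k := by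
  have himage : univ.image (rank · v) = Icc 1 (Fintype.card ι) := by
    refine eq_of_subset_of_card_le (fun k hk => ?_) ?_
    · obtain ⟨j, -, rfl⟩ := mem_image.mp hk
      exact mem_Icc.mpr ⟨rank_pos j v, rank_le_card j v⟩
    · rw [card_image_of_injective _ (rank_injective hv)]
      simp
  rw [← himage] at hk
  simpa using hk

lemma rank_comp_perm (σ : Equiv.Perm ι) (v : ι → α) (j : ι) :
    rank j (v ∘ σ) = rank (σ j) v :=
  card_equiv σ (by simp)

lemma rank_last {n : ℕ} (v : Fin (n + 1) → α) :
    rank (Fin.last n) v = #{i : Fin n | v i.castSucc ≤ v (Fin.last n)} + 1 := by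
  rw [rank, card_filter, Fin.sum_univ_castSucc, if_pos le_rfl, ← card_filter]

end Combinatorics

section Probability

variable {α ι Ω : Type*} [LinearOrder α] [TopologicalSpace α] [OrderClosedTopology α]
  [SecondCountableTopology α] [MeasurableSpace α] [OpensMeasurableSpace α] [Fintype ι]
  [MeasurableSpace Ω] {P : Measure Ω} {X : ι → Ω → α}

lemma measurable_rank (j : ι) : Measurable (rank j : (ι → α) → ℕ) := by
  have : rank j = fun v : ι → α => ∑ i, if v i ≤ v j then 1 else 0 :=
    funext fun v => card_filter _ _
  rw [this]
  exact Finset.measurable_sum _ fun i _ => Measurable.ite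
    (measurableSet_le (measurable_pi_apply i) (measurable_pi_apply j)) measurable_const
    measurable_const

lemma measurable_rank_comp (hX : ∀ i, Measurable (X i)) (j : ι) :
    Measurable fun ω => rank j (fun i => X i ω) :=
  (measurable_rank j).comp (measurable_pi_lambda _ hX)

lemma measure_rank_eq_of_exchangeable (hX : ∀ i, Measurable (X i)) (hexch : Exchangeable P X)
    (j j' : ι) (k : ℕ) :
    P {ω | rank j (fun i => X i ω) = k} = P {ω | rank j' (fun i => X i ω) = k} := by
  classical
  set σ := Equiv.swap j' j
  have hB : MeasurableSet {v : ι → α | rank j' v = k} :=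
    measurable_rank j' (measurableSet_singleton k)
  calc P {ω | rank j (fun i => X i ω) = k}
      = P ((fun ω i => X (σ i) ω) ⁻¹' {v | rank j' v = k}) := by
        congr 1
        ext ω
        change rank j _ = k ↔ rank j' ((fun i => X i ω) ∘ σ) = k
        rw [rank_comp_perm, Equiv.swap_apply_left]
    _ = Measure.map (fun ω i => X i ω) P {v | rank j' v = k} := by
        rw [← hexch σ, Measure.map_apply (measurable_pi_lambda _ fun i => hX _) hB]
    _ = P {ω | rank j' (fun i => X i ω) = k} :=
        Measure.map_apply (measurable_pi_lambda _ hX) hB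

lemma measure_rank_eq_inv_card [IsProbabilityMeasure P] (hX : ∀ i, Measurable (X i))
    (hexch : Exchangeable P X) (hdist : ∀ᵐ ω ∂P, Injective (fun i => X i ω)) (j : ι) {k : ℕ}
    (hk : k ∈ Icc 1 (Fintype.card ι)) :
    P {ω | rank j (fun i => X i ω) = k} = (Fintype.card ι : ENNReal)⁻¹ := by
  set A : ι → Set Ω := fun j => {ω | rank j (fun i => X i ω) = k}
  have hnull : P {ω | ¬ Injective (fun i => X i ω)} = 0 := ae_iff.mp hdist
  have hdisj : Set.Pairwise (univ : Finset ι) (AEDisjoint P on A) :=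
    fun j₁ _ j₂ _ hne => measure_mono_null
      (fun ω hω hinj => hne (rank_injective hinj (hω.1.trans hω.2.symm))) hnull
  have hcover : P (⋃ j ∈ (univ : Finset ι), A j) = 1 := by
    refine (measure_congr (ae_eq_univ.mpr (measure_mono_null ?_ hnull))).trans measure_univ
    intro ω hω hinj
    obtain ⟨j, hj⟩ := exists_rank_eq hinj hk
    exact hω (Set.mem_biUnion (mem_univ j) hj)
  rw [measure_biUnion_finset₀ hdisj fun j _ =>
      (measurable_rank_comp hX j (measurableSet_singleton k)).nullMeasurableSet,
    sum_congr rfl fun j' _ => measure_rank_eq_of_exchangeable hX hexch j' j k, sum_const,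
    card_univ, nsmul_eq_mul] at hcover
  exact ENNReal.eq_inv_of_mul_eq_one_left (by rwa [mul_comm])

lemma measure_rank_mem [IsProbabilityMeasure P] (hX : ∀ i, Measurable (X i))
    (hexch : Exchangeable P X) (hdist : ∀ᵐ ω ∂P, Injective (fun i => X i ω)) (j : ι)
    {s : Finset ℕ} (hs : s ⊆ Icc 1 (Fintype.card ι)) :
    P {ω | rank j (fun i => X i ω) ∈ s} = #s * (Fintype.card ι : ENNReal)⁻¹ := by
  change P ((fun ω => rank j fun i => X i ω) ⁻¹' s) = _
  rw [← Set.biUnion_preimage_singleton, set_biUnion_coe, measure_biUnion_finset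
      (Set.pairwiseDisjoint_fiber _ _)
      fun k _ => measurable_rank_comp hX j (measurableSet_singleton k)]
  exact (sum_congr rfl fun k hk => measure_rank_eq_inv_card hX hexch hdist j (hs hk)).trans
    (by rw [sum_const, nsmul_eq_mul])

end Probability

end ExchangeableRank

theorem stmt2 {Ω : Type*} [MeasurableSpace Ω] (P : Measure Ω) [IsProbabilityMeasure P]
    (n : ℕ) (hn : 0 < n) (Z : Fin (n + 1) → Ω → ℝ) (hZ : ∀ i, Measurable (Z i))
    (hexch : ∀ σ : Equiv.Perm (Fin (n + 1)),
      Measure.map (fun ω i => Z (σ i) ω) P = Measure.map (fun ω i => Z i ω) P)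
    (hdist : ∀ᵐ ω ∂P, Function.Injective (fun i => Z i ω))
    (Fn : Ω → ℝ → ℝ)
    (hFn : ∀ ω z, Fn ω z =
      ((univ.filter (fun i : Fin n => Z i.castSucc ω ≤ z)).card : ℝ) / n)
    (a b : ℝ) (ha : 0 ≤ a) (hab : a ≤ b) (hb : b ≤ 1) (α : ℝ)
    (hcal : 1 - α ≤ ((⌊(n : ℝ) * b⌋ - ⌈(n : ℝ) * a⌉ + 1 : ℤ) : ℝ) / (n + 1)) :
    ENNReal.ofReal (1 - α) ≤
      P {ω | Z (Fin.last n) ω ∈ {z : ℝ | Fn ω z ∈ Set.Icc a b}} := by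
  set p := ⌈(n : ℝ) * a⌉.toNat
  set q := ⌊(n : ℝ) * b⌋.toNat
  have hp : (p : ℤ) = ⌈(n : ℝ) * a⌉ := Int.toNat_of_nonneg (Int.ceil_nonneg (by positivity))
  have hq : (q : ℤ) = ⌊(n : ℝ) * b⌋ := Int.toNat_of_nonneg (Int.floor_nonneg.mpr (by nlinarith))
  have hqn : q ≤ n := by
    have : ⌊(n : ℝ) * b⌋ ≤ n :=
      (Int.floor_mono (by nlinarith : (n : ℝ) * b ≤ n)).trans (Int.floor_natCast n).le
    omega
  have hcount : ((⌊(n : ℝ) * b⌋ - ⌈(n : ℝ) * a⌉ + 1 : ℤ) : ℝ) ≤ ((q + 1 - p : ℕ) : ℝ) := by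
    have : ⌊(n : ℝ) * b⌋ - ⌈(n : ℝ) * a⌉ + 1 ≤ ((q + 1 - p : ℕ) : ℤ) := by omega
    exact_mod_cast this
  have hevent : {ω | ExchangeableRank.rank (Fin.last n) (fun i => Z i ω) ∈ Icc (p + 1) (q + 1)} ⊆
      {ω | Z (Fin.last n) ω ∈ {z : ℝ | Fn ω z ∈ Set.Icc a b}} := by
    intro ω hω
    simp only [Set.mem_ofPred_eq, ExchangeableRank.rank_last, mem_Icc] at hω ⊢
    rw [hFn]
    exact div_mem_Icc_of_ceil_le_of_le_floor hn (by omega) (by omega)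
  calc ENNReal.ofReal (1 - α)
      ≤ ENNReal.ofReal (((q + 1 - p : ℕ) : ℝ) / ((n + 1 : ℕ) : ℝ)) := by
        refine ENNReal.ofReal_le_ofReal (hcal.trans ?_)
        rw [Nat.cast_succ]
        gcongr
    _ = P {ω | ExchangeableRank.rank (Fin.last n) (fun i => Z i ω) ∈ Icc (p + 1) (q + 1)} := by
        rw [ExchangeableRank.measure_rank_mem hZ hexch hdist _
            (Icc_subset_Icc (by omega) (by simpa)),
          ENNReal.ofReal_div_of_pos (by positivity), ENNReal.ofReal_natCast,
          ENNReal.ofReal_natCast, Nat.card_Icc, Fintype.card_fin, div_eq_mul_inv]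
        congr 2
        omega
    _ ≤ _ := measure_mono hevent
end
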